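/- Let n ≥ 2, σ ∈ (0,2), and 0 < λ ≤ nΛ. Let v : ℝ^n → ℝ be bounded and Lebesgue measurable, and let x ∈ ℝ^n be such that ∫_{ℝ^n} |δv(x,y)|/|y|^{n+σ} dy < ∞. Define the symmetric matrix H(x) := ((n+σ−2)(n+σ)/2)·A(n,2−σ)·∫_{ℝ^n} δv(x,y)·[ y yᵀ/|y|^{n+σ+2} − Id/((n+σ)|y|^{n+σ}) ] dy. If both h_σ(v,x) and H(x) are positive semidefinite, then M⁻(v,x) ≥ 0 and there is a constant C(n,σ) > 0 depending only on n and σ such that det(H(x)) ≤ ((C(n,σ)/λ)·M⁻(v,x))^n. -/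

import Mathlib

open MeasureTheory

noncomputable section

/-- The second difference `δw(x,y) = w(x+y) + w(x-y) - 2 w(x)`. -/
def secondDiff {n : ℕ} (w : EuclideanSpace ℝ (Fin n) → ℝ)
    (x y : EuclideanSpace ℝ (Fin n)) : ℝ :=
  w (x + y) + w (x - y) - 2 * w x

/-- The constant `A(n,α) = π^{α - n/2} Γ((n-α)/2) / Γ(α/2)`. -/
def rieszA (n : ℕ) (α : ℝ) : ℝ :=
  Real.pi ^ (α - (n : ℝ) / 2) * Real.Gamma (((n : ℝ) - α) / 2) / Real.Gamma (α / 2)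

/-- The quadratic form `yᵀ A y`. -/
def quadForm {n : ℕ} (A : Matrix (Fin n) (Fin n) ℝ) (y : EuclideanSpace ℝ (Fin n)) : ℝ :=
  ∑ i, ∑ j, A i j * y i * y j

/-- The matrix `h_σ(v,x)`. -/
def hMat (n : ℕ) (σ : ℝ) (v : EuclideanSpace ℝ (Fin n) → ℝ)
    (x : EuclideanSpace ℝ (Fin n)) : Matrix (Fin n) (Fin n) ℝ :=
  Matrix.of fun i j =>
    (((n : ℝ) + σ - 2) * ((n : ℝ) + σ) / 2) * rieszA n (2 - σ) *
      ∫ y : EuclideanSpace ℝ (Fin n),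
        secondDiff v x y * (y i * y j) / ‖y‖ ^ ((n : ℝ) + σ + 2)

/-- The matrix `H(x)` appearing as the formal Hessian of the Riesz potential. -/
def HMatFull (n : ℕ) (σ : ℝ) (v : EuclideanSpace ℝ (Fin n) → ℝ)
    (x : EuclideanSpace ℝ (Fin n)) : Matrix (Fin n) (Fin n) ℝ :=
  Matrix.of fun i j =>
    (((n : ℝ) + σ - 2) * ((n : ℝ) + σ) / 2) * rieszA n (2 - σ) *
      ∫ y : EuclideanSpace ℝ (Fin n),
        secondDiff v x y * (y i * y j / ‖y‖ ^ ((n : ℝ) + σ + 2) -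
          (if i = j then 1 else 0) / (((n : ℝ) + σ) * ‖y‖ ^ ((n : ℝ) + σ)))

/-- The extremal (minimal) operator `M⁻(v,x)`. -/
def Mminus (n : ℕ) (σ lam Lam : ℝ) (v : EuclideanSpace ℝ (Fin n) → ℝ)
    (x : EuclideanSpace ℝ (Fin n)) : ℝ :=
  sInf { z | ∃ A : Matrix (Fin n) (Fin n) ℝ, A.PosSemidef ∧ lam ≤ A.trace ∧
      (Lam • (1 : Matrix (Fin n) (Fin n) ℝ) - A).PosSemidef ∧
      z = (2 - σ) * ∫ y : EuclideanSpace ℝ (Fin n),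
        secondDiff v x y * quadForm A y / ‖y‖ ^ ((n : ℝ) + σ + 2) }



/-!
Since `∑ᵢ yᵢ² / |y|^{n+σ+2} = 1 / |y|^{n+σ}`, the two matrices differ by a multiple of the
identity: `H = h - t • Id` with `t = c ∫ δv / |y|^{n+σ} / (n+σ)`, `c` the prefactor, and
`tr H = σ t`, so `t ≥ 0`. For an admissible `A` the integral in `M⁻` is
`(2-σ)/c · ∑ Aᵢⱼ hᵢⱼ = (2-σ)/c · (∑ Aᵢⱼ Hᵢⱼ + t tr A) ≥ (2-σ) t λ / c`, the Frobenius product of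
positive semidefinite matrices being nonnegative by the Schur product theorem. AM-GM on the
eigenvalues of `H` gives `det H ≤ (tr H / n)^n = (σ t / n)^n`, which is the claim with
`C = σ c / (n (2-σ))`.
-/

open Matrix Finset

theorem Real.prod_le_arith_mean_pow {ι : Type*} (s : Finset ι) {z : ι → ℝ}
    (hz : ∀ i ∈ s, 0 ≤ z i) : ∏ i ∈ s, z i ≤ ((∑ i ∈ s, z i) / #s) ^ #s := by
  rcases s.eq_empty_or_nonempty with rfl | hs
  · simp
  have hcard : (0 : ℝ) < #s := by exact_mod_cast hs.card_pos
  have amgm := Real.geom_mean_le_arith_mean s (fun _ => 1) z (fun _ _ => zero_le_one)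
    (by simpa using hcard) hz
  simp only [Real.rpow_one, sum_const, nsmul_eq_mul, mul_one, one_mul] at amgm
  calc ∏ i ∈ s, z i = ((∏ i ∈ s, z i) ^ (#s : ℝ)⁻¹) ^ #s := by
        rw [← Real.rpow_natCast, ← Real.rpow_mul (prod_nonneg hz),
          inv_mul_cancel₀ hcard.ne', Real.rpow_one]
    _ ≤ ((∑ i ∈ s, z i) / #s) ^ #s := by gcongr; exact Real.rpow_nonneg (prod_nonneg hz) _

theorem Matrix.PosSemidef.det_le_trace_div_card_pow {ι : Type*} [Fintype ι] [DecidableEq ι]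
    {A : Matrix ι ι ℝ} (hA : A.PosSemidef) :
    A.det ≤ (A.trace / Fintype.card ι) ^ Fintype.card ι := by
  rw [hA.isHermitian.det_eq_prod_eigenvalues, hA.isHermitian.trace_eq_sum_eigenvalues]
  exact Real.prod_le_arith_mean_pow univ fun i _ => hA.eigenvalues_nonneg i

theorem Matrix.PosSemidef.sum_mul_apply_nonneg {ι : Type*} [Fintype ι]
    {A B : Matrix ι ι ℝ} (hA : A.PosSemidef) (hB : B.PosSemidef) :
    0 ≤ ∑ i, ∑ j, A i j * B i j := by
  simpa [dotProduct, mulVec, hadamard] using (hA.hadamard hB).dotProduct_mulVec_nonneg 1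

theorem Matrix.PosSemidef.mul_trace_le_sum_mul_add_smul_one {ι : Type*} [Fintype ι]
    [DecidableEq ι] {A H : Matrix ι ι ℝ} (hA : A.PosSemidef) (hH : H.PosSemidef) (t : ℝ) :
    t * A.trace ≤ ∑ i, ∑ j, A i j * (H + t • 1) i j := by
  have hsplit : ∑ i, ∑ j, A i j * (H + t • 1) i j = ∑ i, ∑ j, A i j * H i j + t * A.trace := by
    simp [Matrix.one_apply, mul_add, Finset.sum_add_distrib, Matrix.trace, Finset.mul_sum, mul_comm]
  linarith [hA.sum_mul_apply_nonneg hH]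

def rieszCoeff (n : ℕ) (σ : ℝ) : ℝ :=
  (((n : ℝ) + σ - 2) * ((n : ℝ) + σ) / 2) * rieszA n (2 - σ)

def secondMoment (n : ℕ) (σ : ℝ) (v : EuclideanSpace ℝ (Fin n) → ℝ)
    (x : EuclideanSpace ℝ (Fin n)) : Matrix (Fin n) (Fin n) ℝ :=
  Matrix.of fun i j => ∫ y, secondDiff v x y * (y i * y j) / ‖y‖ ^ ((n : ℝ) + σ + 2)

def secondDiffIntegral (n : ℕ) (σ : ℝ) (v : EuclideanSpace ℝ (Fin n) → ℝ)
    (x : EuclideanSpace ℝ (Fin n)) : ℝ :=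
  ∫ y, secondDiff v x y / ‖y‖ ^ ((n : ℝ) + σ)

def hessianShift (n : ℕ) (σ : ℝ) (v : EuclideanSpace ℝ (Fin n) → ℝ)
    (x : EuclideanSpace ℝ (Fin n)) : ℝ :=
  rieszCoeff n σ * secondDiffIntegral n σ v x / ((n : ℝ) + σ)

theorem rieszA_pos {n : ℕ} {α : ℝ} (hα : 0 < α) (hαn : α < n) : 0 < rieszA n α := by
  have := Real.Gamma_pos_of_pos (half_pos (sub_pos.2 hαn))
  have := Real.Gamma_pos_of_pos (half_pos hα)
  unfold rieszA
  positivity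

theorem rieszCoeff_pos {n : ℕ} (hn : 2 ≤ n) {σ : ℝ} (hσ : σ ∈ Set.Ioo (0 : ℝ) 2) :
    0 < rieszCoeff n σ := by
  have hn' : (2 : ℝ) ≤ n := by exact_mod_cast hn
  have : 0 < (n + σ - 2) * (n + σ) / 2 := by nlinarith [hσ.1]
  exact mul_pos this (rieszA_pos (by linarith [hσ.2]) (by linarith [hσ.1]))

theorem hMat_eq_smul (n : ℕ) (σ : ℝ) (v : EuclideanSpace ℝ (Fin n) → ℝ)
    (x : EuclideanSpace ℝ (Fin n)) : hMat n σ v x = rieszCoeff n σ • secondMoment n σ v x :=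
  rfl

theorem le_Mminus_of_forall {n : ℕ} (hn : 0 < n) {σ lam Lam : ℝ} (hlam : 0 ≤ lam)
    (hlamLam : lam ≤ n * Lam) {v : EuclideanSpace ℝ (Fin n) → ℝ} {x : EuclideanSpace ℝ (Fin n)}
    {b : ℝ} (hb : ∀ A : Matrix (Fin n) (Fin n) ℝ, A.PosSemidef → lam ≤ A.trace →
      b ≤ (2 - σ) * ∫ y, secondDiff v x y * quadForm A y / ‖y‖ ^ ((n : ℝ) + σ + 2)) :
    b ≤ Mminus n σ lam Lam v x := by
  have hn' : (0 : ℝ) < n := by exact_mod_cast hn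
  refine le_csInf ⟨_, (lam / n) • 1, PosSemidef.one.smul (by positivity), ?_, ?_, rfl⟩ ?_
  · simp [hn'.ne']
  · rw [← sub_smul]
    exact PosSemidef.one.smul (sub_nonneg.2 ((div_le_iff₀ hn').2 (by linarith)))
  · rintro z ⟨A, hA, hAtr, -, rfl⟩
    exact hb A hA hAtr

section

variable {n : ℕ} {σ : ℝ} {v : EuclideanSpace ℝ (Fin n) → ℝ} {x : EuclideanSpace ℝ (Fin n)}

theorem secondDiff_zero_right : secondDiff v x 0 = 0 := by
  simp only [secondDiff, add_zero, sub_zero]; ring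

theorem norm_rpow_add_two {y : EuclideanSpace ℝ (Fin n)} (hy : y ≠ 0) (p : ℝ) :
    ‖y‖ ^ (p + 2) = ‖y‖ ^ p * ‖y‖ ^ 2 := by
  rw [Real.rpow_add (norm_pos_iff.2 hy), Real.rpow_two]

variable (hv : Measurable v)
  (hInt : Integrable (fun y => |secondDiff v x y| / ‖y‖ ^ ((n : ℝ) + σ)))
include hv hInt

theorem integrable_secondMoment_integrand (i j : Fin n) :
    Integrable (fun y => secondDiff v x y * (y i * y j) / ‖y‖ ^ ((n : ℝ) + σ + 2)) := by
  refine hInt.mono (Measurable.aestronglyMeasurable ?_) (ae_of_all _ fun y => ?_)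
  · unfold secondDiff; fun_prop
  rcases eq_or_ne y 0 with rfl | hy
  · simp [secondDiff_zero_right]
  have hij : |y i| * |y j| ≤ ‖y‖ ^ 2 := by
    rw [sq]
    exact mul_le_mul (PiLp.norm_apply_le y i) (PiLp.norm_apply_le y j) (abs_nonneg _)
      (norm_nonneg _)
  rw [norm_rpow_add_two hy, mul_div_mul_comm]
  simp only [norm_mul, norm_div, Real.norm_eq_abs, abs_abs]
  refine mul_le_of_le_one_right (by positivity) ?_
  rw [abs_of_pos (by positivity : (0 : ℝ) < ‖y‖ ^ 2)]
  exact div_le_one_of_le₀ hij (by positivity)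

theorem integrable_secondDiff_div :
    Integrable (fun y => secondDiff v x y / ‖y‖ ^ ((n : ℝ) + σ)) :=
  hInt.mono (Measurable.aestronglyMeasurable (by unfold secondDiff; fun_prop))
    (ae_of_all _ fun y => by simp only [norm_div, Real.norm_eq_abs, abs_abs, le_refl])

theorem trace_secondMoment : (secondMoment n σ v x).trace = secondDiffIntegral n σ v x := by
  simp only [Matrix.trace, Matrix.diag_apply, secondMoment, of_apply, secondDiffIntegral]
  rw [← integral_finsetSum _ fun i _ => integrable_secondMoment_integrand hv hInt i i]
  refine integral_congr_ae (ae_of_all _ fun y => ?_)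
  rcases eq_or_ne y 0 with rfl | hy
  · simp [secondDiff_zero_right]
  have hsq : ∑ i, y i * y i = ‖y‖ ^ 2 := by
    rw [EuclideanSpace.real_norm_sq_eq]; simp only [sq]
  dsimp only
  rw [← Finset.sum_div, ← Finset.mul_sum, hsq, norm_rpow_add_two hy,
    mul_div_mul_right _ _ (by positivity)]

theorem HMatFull_eq_sub_smul_one :
    HMatFull n σ v x = hMat n σ v x - hessianShift n σ v x • 1 := by
  ext i j
  have hsplit : ∀ y : EuclideanSpace ℝ (Fin n),
      secondDiff v x y * (y i * y j / ‖y‖ ^ ((n : ℝ) + σ + 2) -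
          (if i = j then 1 else 0) / (((n : ℝ) + σ) * ‖y‖ ^ ((n : ℝ) + σ)))
        = secondDiff v x y * (y i * y j) / ‖y‖ ^ ((n : ℝ) + σ + 2)
          - (if i = j then ((n : ℝ) + σ)⁻¹ else 0) * (secondDiff v x y / ‖y‖ ^ ((n : ℝ) + σ)) := by
    intro y; split_ifs
    · field_simp
    · simp [mul_div_assoc]
  simp only [HMatFull, hMat, of_apply, Matrix.sub_apply, Matrix.smul_apply, Matrix.one_apply,
    smul_eq_mul, hsplit]
  rw [integral_sub (integrable_secondMoment_integrand hv hInt i j)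
    ((integrable_secondDiff_div hv hInt).const_mul _), integral_const_mul]
  simp only [hessianShift, secondDiffIntegral, rieszCoeff]
  split_ifs <;> ring

theorem integral_quadForm (A : Matrix (Fin n) (Fin n) ℝ) :
    ∫ y, secondDiff v x y * quadForm A y / ‖y‖ ^ ((n : ℝ) + σ + 2)
      = ∑ i, ∑ j, A i j * secondMoment n σ v x i j := by
  have hexpand : ∀ y : EuclideanSpace ℝ (Fin n),
      secondDiff v x y * quadForm A y / ‖y‖ ^ ((n : ℝ) + σ + 2)
        = ∑ i, ∑ j, A i j * (secondDiff v x y * (y i * y j) / ‖y‖ ^ ((n : ℝ) + σ + 2)) := by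
    intro y
    simp only [quadForm, Finset.mul_sum, Finset.sum_div]
    exact Finset.sum_congr rfl fun i _ => Finset.sum_congr rfl fun j _ => by ring
  simp only [hexpand, secondMoment, of_apply]
  rw [integral_finsetSum (f := fun i y => ∑ j, A i j *
      (secondDiff v x y * (y i * y j) / ‖y‖ ^ ((n : ℝ) + σ + 2))) _ fun i _ =>
    integrable_finsetSum _ fun j _ => (integrable_secondMoment_integrand hv hInt i j).const_mul _]
  refine Finset.sum_congr rfl fun i _ => ?_
  rw [integral_finsetSum _ fun j _ => (integrable_secondMoment_integrand hv hInt i j).const_mul _]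
  exact Finset.sum_congr rfl fun j _ => integral_const_mul _ _

theorem trace_HMatFull (hnσ : (n : ℝ) + σ ≠ 0) :
    (HMatFull n σ v x).trace = σ * hessianShift n σ v x := by
  rw [HMatFull_eq_sub_smul_one hv hInt, trace_sub, trace_smul, trace_one, hMat_eq_smul, trace_smul,
    trace_secondMoment hv hInt]
  simp only [hessianShift, Fintype.card_fin, smul_eq_mul]
  field_simp
  ring

theorem hessianShift_nonneg (hσ : 0 < σ) (hH : (HMatFull n σ v x).PosSemidef) :
    0 ≤ hessianShift n σ v x := by
  have := hH.trace_nonneg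
  rw [trace_HMatFull hv hInt (by positivity)] at this
  exact nonneg_of_mul_nonneg_right (by linarith) hσ

theorem div_rieszCoeff_mul_le_Mminus (hn : 2 ≤ n) (hσ : σ ∈ Set.Ioo (0 : ℝ) 2) {lam Lam : ℝ}
    (hlam : 0 ≤ lam) (hlamLam : lam ≤ n * Lam) (hH : (HMatFull n σ v x).PosSemidef) :
    (2 - σ) / rieszCoeff n σ * (hessianShift n σ v x * lam) ≤ Mminus n σ lam Lam v x := by
  have hc := rieszCoeff_pos hn hσ
  have h2σ : 0 ≤ 2 - σ := by linarith [hσ.2]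
  have ht := hessianShift_nonneg hv hInt hσ.1 hH
  have hK : rieszCoeff n σ • secondMoment n σ v x =
      HMatFull n σ v x + hessianShift n σ v x • 1 := by
    rw [← hMat_eq_smul, HMatFull_eq_sub_smul_one hv hInt, sub_add_cancel]
  refine le_Mminus_of_forall (by omega) hlam hlamLam fun A hA hAtr => ?_
  have key := hA.mul_trace_le_sum_mul_add_smul_one hH (hessianShift n σ v x)
  rw [← hK] at key
  simp only [Matrix.smul_apply, smul_eq_mul, mul_left_comm _ (rieszCoeff n σ), ← Finset.mul_sum]
    at key
  rw [integral_quadForm hv hInt]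
  calc (2 - σ) / rieszCoeff n σ * (hessianShift n σ v x * lam)
      ≤ (2 - σ) / rieszCoeff n σ * (hessianShift n σ v x * A.trace) := by gcongr
    _ ≤ (2 - σ) / rieszCoeff n σ *
          (rieszCoeff n σ * ∑ i, ∑ j, A i j * secondMoment n σ v x i j) := by gcongr
    _ = (2 - σ) * ∑ i, ∑ j, A i j * secondMoment n σ v x i j := by field_simp

end

/-- if `h_σ(v,x)` and `H(x)` are positive semidefinite then `M⁻(v,x) ≥ 0` and
`det H(x) ≤ ((C(n,σ)/λ)·M⁻(v,x))ⁿ` for a constant depending only on `n` and `σ`. -/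
theorem stmt13 (n : ℕ) (hn : 2 ≤ n) (σ : ℝ) (hσ : σ ∈ Set.Ioo (0 : ℝ) 2) :
    ∃ C : ℝ, 0 < C ∧
      ∀ lam Lam : ℝ, 0 < lam → lam ≤ (n : ℝ) * Lam →
      ∀ v : EuclideanSpace ℝ (Fin n) → ℝ,
        (∃ B : ℝ, ∀ z, |v z| ≤ B) → Measurable v →
      ∀ x : EuclideanSpace ℝ (Fin n),
        Integrable (fun y : EuclideanSpace ℝ (Fin n) =>
          |secondDiff v x y| / ‖y‖ ^ ((n : ℝ) + σ)) →
        (hMat n σ v x).PosSemidef →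
        (HMatFull n σ v x).PosSemidef →
        0 ≤ Mminus n σ lam Lam v x ∧
        (HMatFull n σ v x).det ≤ ((C / lam) * Mminus n σ lam Lam v x) ^ n := by
  have hc := rieszCoeff_pos hn hσ
  obtain ⟨hσ0, hσ2⟩ := hσ
  have h2σ : 0 < 2 - σ := by linarith
  have hn' : (0 : ℝ) < n := by exact_mod_cast (by omega : 0 < n)
  refine ⟨σ * rieszCoeff n σ / (n * (2 - σ)), by positivity, ?_⟩
  intro lam Lam hlam hlamLam v _ hv x hInt _ hH
  have hM := div_rieszCoeff_mul_le_Mminus hv hInt hn ⟨hσ0, hσ2⟩ hlam.le hlamLam hH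
  have ht := hessianShift_nonneg hv hInt hσ0 hH
  refine ⟨le_trans (by positivity) hM, ?_⟩
  calc (HMatFull n σ v x).det
      ≤ ((HMatFull n σ v x).trace / n) ^ n := by simpa using hH.det_le_trace_div_card_pow
    _ = (σ * rieszCoeff n σ / (n * (2 - σ)) / lam *
          ((2 - σ) / rieszCoeff n σ * (hessianShift n σ v x * lam))) ^ n := by
        rw [trace_HMatFull hv hInt (by positivity)]
        field_simp
    _ ≤ (σ * rieszCoeff n σ / (n * (2 - σ)) / lam * Mminus n σ lam Lam v x) ^ n := by gcongr
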